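/- arXiv:2004.07860 — 2 statements merged into one kernel-verified Lean document; each statement's English description precedes it below -/
import Mathlib

section
/- For a > 0, b > 0 and c > 0, ∫₀^∞ z^{a-1} ln(z) / (1 + z/c)^{a+b} dz = c^a · B(b, a) · (ψ(a) − ψ(b) + ln c). -/
open MeasureTheory ProbabilityTheory Real Filter Asymptotics

/-- Beta function `B(a,b) = Γ(a)Γ(b)/Γ(a+b)`. -/
noncomputable def Beta (a b : ℝ) : ℝ := Real.Gamma a * Real.Gamma b / Real.Gamma (a + b)

/-- Pochhammer symbol `(a)_n`. -/
noncomputable def poch (a : ℝ) (n : ℕ) : ℝ := (ascPochhammer ℝ n).eval a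

/-- Gauss hypergeometric function `₂F₁` (series definition). -/
noncomputable def hyp2F1 (a b c x : ℝ) : ℝ :=
  ∑' n : ℕ, poch a n * poch b n / (poch c n * (n.factorial : ℝ)) * x ^ n

/-- Generalized hypergeometric function `₃F₂` (series definition). -/
noncomputable def hyp3F2 (a1 a2 a3 b1 b2 x : ℝ) : ℝ :=
  ∑' n : ℕ, poch a1 n * poch a2 n * poch a3 n /
    (poch b1 n * poch b2 n * (n.factorial : ℝ)) * x ^ n

/-- Appell two-variable hypergeometric function `F₁` (series definition). -/
noncomputable def appellF1 (a b1 b2 c x y : ℝ) : ℝ :=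
  ∑' p : ℕ × ℕ, poch a (p.1 + p.2) * poch b1 p.1 * poch b2 p.2 /
    (poch c (p.1 + p.2) * (p.1.factorial : ℝ) * (p.2.factorial : ℝ)) * x ^ p.1 * y ^ p.2

/-- Digamma function `ψ = Γ'/Γ`. -/
noncomputable def digamma (x : ℝ) : ℝ := deriv Real.Gamma x / Real.Gamma x

/-- Fisher-Snedecor `𝓕` composite fading PDF with multipath parameter `m`,
shadowing parameter `ms` and mean power `γbar`. -/
noncomputable def fisherPDF (m ms γbar x : ℝ) : ℝ :=
  if 0 < x then
    m ^ m * (ms - 1) ^ ms * γbar ^ ms * x ^ (m - 1) /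
      (Beta m ms * (m * x + (ms - 1) * γbar) ^ (m + ms))
  else 0

/-- Unit-scale Fisher-Snedecor `𝓕` PDF `Λ^m t^(m-1)/(B(m,ms)(1+Λt)^(m+ms))`. -/
noncomputable def fisherPDFΛ (m ms Λ t : ℝ) : ℝ :=
  if 0 < t then Λ ^ m * t ^ (m - 1) / (Beta m ms * (1 + Λ * t) ^ (m + ms)) else 0

/-! Rescaling `z = c x` reduces everything to `c = 1`, plus `log c` times the Beta integral.
The substitution `z = x / (1 - x)` turns `∫₀^∞ z^(t-1) / (1 + z)^s dz` into Euler's integral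
for `B(t, s - t)`. Differentiating in `t` under the integral sign, with `s = a + b` held fixed,
gives the logarithmic integral, while `d/dt [Γ(t) Γ(s - t) / Γ(s)] = B(t, s - t) (ψ(t) - ψ(s - t))`.
-/

open Set Topology

lemma Beta_comm (a b : ℝ) : Beta a b = Beta b a := by
  rw [Beta, Beta, add_comm a b, mul_comm]

lemma ofReal_cpow_mul_one_sub_cpow {a b x : ℝ} (hx : x ∈ Ioc (0 : ℝ) 1) :
    (x : ℂ) ^ ((a : ℂ) - 1) * (1 - (x : ℂ)) ^ ((b : ℂ) - 1) =
      ((x ^ (a - 1) * (1 - x) ^ (b - 1) : ℝ) : ℂ) := by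
  rw [Complex.ofReal_mul, Complex.ofReal_cpow hx.1.le, Complex.ofReal_cpow (sub_nonneg.2 hx.2)]
  push_cast
  rfl

lemma integrableOn_Ioo_rpow_mul_one_sub_rpow {a b : ℝ} (ha : 0 < a) (hb : 0 < b) :
    IntegrableOn (fun x ↦ x ^ (a - 1) * (1 - x) ^ (b - 1)) (Ioo (0 : ℝ) 1) := by
  have h := Complex.betaIntegral_convergent (u := a) (v := b) (by simpa) (by simpa)
  rw [intervalIntegrable_iff_integrableOn_Ioc_of_le zero_le_one] at h
  have hre : IntegrableOn (fun x : ℝ ↦ ((x : ℂ) ^ ((a : ℂ) - 1) * (1 - (x : ℂ)) ^ ((b : ℂ) - 1)).re)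
      (Ioo 0 1) := (h.mono_set Ioo_subset_Ioc_self).re
  refine hre.congr_fun (fun x hx ↦ ?_) measurableSet_Ioo
  simp only [ofReal_cpow_mul_one_sub_cpow (Ioo_subset_Ioc_self hx), Complex.ofReal_re]

lemma integral_Ioo_rpow_mul_one_sub_rpow {a b : ℝ} (ha : 0 < a) (hb : 0 < b) :
    ∫ x in Ioo 0 1, x ^ (a - 1) * (1 - x) ^ (b - 1) = Beta a b := by
  have h : Complex.betaIntegral a b = ∫ x in Ioo (0 : ℝ) 1, x ^ (a - 1) * (1 - x) ^ (b - 1) := by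
    rw [Complex.betaIntegral, intervalIntegral.integral_of_le zero_le_one,
      ← integral_Ioc_eq_integral_Ioo, ← integral_complex_ofReal]
    exact setIntegral_congr_fun measurableSet_Ioc fun x hx ↦ ofReal_cpow_mul_one_sub_cpow hx
  rw [Beta, ← ProbabilityTheory.beta, ProbabilityTheory.beta_eq_betaIntegralReal a b ha hb, h,
    Complex.ofReal_re]

lemma image_div_one_sub_Ioo : (fun x : ℝ ↦ x / (1 - x)) '' Ioo 0 1 = Ioi 0 := by
  ext z
  constructor
  · rintro ⟨x, hx, rfl⟩
    exact div_pos hx.1 (sub_pos.2 hx.2)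
  · intro (hz : 0 < z)
    refine ⟨z / (1 + z), ⟨by positivity, (div_lt_one (by positivity)).2 (by linarith)⟩, ?_⟩
    field_simp
    ring

lemma injOn_div_one_sub : InjOn (fun x : ℝ ↦ x / (1 - x)) (Ioo 0 1) := by
  intro x hx y hy hxy
  rw [div_eq_div_iff (sub_pos.2 hx.2).ne' (sub_pos.2 hy.2).ne'] at hxy
  linarith

lemma hasDerivAt_div_one_sub {x : ℝ} (hx : x ≠ 1) :
    HasDerivAt (fun x : ℝ ↦ x / (1 - x)) ((1 - x) ^ 2)⁻¹ x := by
  have h1x : 1 - x ≠ 0 := sub_ne_zero.2 hx.symm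
  refine ((hasDerivAt_id' x).div ((hasDerivAt_id' x).const_sub 1) h1x).congr_deriv ?_
  field_simp
  ring

lemma integral_Ioi_eq_integral_Ioo_div_one_sub (g : ℝ → ℝ) :
    ∫ z in Ioi 0, g z = ∫ x in Ioo 0 1, ((1 - x) ^ 2)⁻¹ * g (x / (1 - x)) := by
  rw [← image_div_one_sub_Ioo, integral_image_eq_integral_abs_deriv_smul measurableSet_Ioo
    (fun x hx ↦ (hasDerivAt_div_one_sub hx.2.ne).hasDerivWithinAt) injOn_div_one_sub]
  refine setIntegral_congr_fun measurableSet_Ioo fun x _ ↦ ?_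
  rw [abs_of_nonneg (by positivity), smul_eq_mul]

lemma integrableOn_Ioi_iff_integrableOn_Ioo_div_one_sub (g : ℝ → ℝ) :
    IntegrableOn g (Ioi 0) ↔
      IntegrableOn (fun x ↦ ((1 - x) ^ 2)⁻¹ * g (x / (1 - x))) (Ioo 0 1) := by
  rw [← image_div_one_sub_Ioo, integrableOn_image_iff_integrableOn_abs_deriv_smul measurableSet_Ioo
    (fun x hx ↦ (hasDerivAt_div_one_sub hx.2.ne).hasDerivWithinAt) injOn_div_one_sub]
  refine integrableOn_congr_fun (fun x _ ↦ ?_) measurableSet_Ioo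
  rw [abs_of_nonneg (by positivity), smul_eq_mul]

lemma inv_one_sub_sq_mul_rpow_div_one_add_rpow {p s x : ℝ} (hx : x ∈ Ioo (0 : ℝ) 1) :
    ((1 - x) ^ 2)⁻¹ * ((x / (1 - x)) ^ (p - 1) / (1 + x / (1 - x)) ^ s) =
      x ^ (p - 1) * (1 - x) ^ (s - p - 1) := by
  have hu : 0 < 1 - x := sub_pos.2 hx.2
  have h1 : 1 + x / (1 - x) = (1 - x)⁻¹ := by field_simp; ring
  rw [h1, div_rpow hx.1.le hu.le, inv_rpow hu.le, show s - p - 1 = s - (p - 1 + 2) by ring,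
    rpow_sub hu s, rpow_add hu (p - 1) 2, rpow_two]
  field_simp

lemma integrableOn_Ioi_rpow_div_one_add_rpow {p s : ℝ} (hp : 0 < p) (hps : p < s) :
    IntegrableOn (fun z ↦ z ^ (p - 1) / (1 + z) ^ s) (Ioi (0 : ℝ)) := by
  rw [integrableOn_Ioi_iff_integrableOn_Ioo_div_one_sub]
  exact (integrableOn_Ioo_rpow_mul_one_sub_rpow hp (sub_pos.2 hps)).congr_fun
    (fun x hx ↦ (inv_one_sub_sq_mul_rpow_div_one_add_rpow hx).symm) measurableSet_Ioo

lemma integral_Ioi_rpow_div_one_add_rpow {p s : ℝ} (hp : 0 < p) (hps : p < s) :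
    ∫ z in Ioi 0, z ^ (p - 1) / (1 + z) ^ s = Beta p (s - p) := by
  rw [integral_Ioi_eq_integral_Ioo_div_one_sub,
    setIntegral_congr_fun measurableSet_Ioo fun x hx ↦ inv_one_sub_sq_mul_rpow_div_one_add_rpow hx]
  exact integral_Ioo_rpow_mul_one_sub_rpow hp (sub_pos.2 hps)

lemma rpow_mul_abs_log_le {z t a δ : ℝ} (hz : 0 < z) (hδ : 0 < δ) (ht : |t - a| < δ) :
    z ^ (t - 1) * |log z| ≤ (z ^ (a - 2 * δ - 1) + z ^ (a + 2 * δ - 1)) / δ := by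
  rw [abs_lt] at ht
  have hpos (r : ℝ) : 0 ≤ z ^ r := rpow_nonneg hz.le r
  rcases le_total z 1 with hz1 | hz1
  · have hlog : |log z| ≤ z ^ (-δ) / δ := by
      have h := log_le_rpow_div (inv_nonneg.2 hz.le) hδ
      rwa [log_inv, inv_rpow hz.le, ← rpow_neg hz.le, ← abs_of_nonpos (log_nonpos hz.le hz1)] at h
    calc z ^ (t - 1) * |log z| ≤ z ^ (t - 1) * (z ^ (-δ) / δ) :=
          mul_le_mul_of_nonneg_left hlog (hpos _)
      _ = z ^ (t - 1 - δ) / δ := by rw [rpow_sub hz (t - 1) δ, rpow_neg hz.le]; ring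
      _ ≤ z ^ (a - 2 * δ - 1) / δ :=
          div_le_div_of_nonneg_right (rpow_le_rpow_of_exponent_ge hz hz1 (by linarith)) hδ.le
      _ ≤ _ := by gcongr; exact le_add_of_nonneg_right (hpos _)
  · have hlog : |log z| ≤ z ^ δ / δ := by
      rw [abs_of_nonneg (log_nonneg hz1)]
      exact log_le_rpow_div hz.le hδ
    calc z ^ (t - 1) * |log z| ≤ z ^ (t - 1) * (z ^ δ / δ) :=
          mul_le_mul_of_nonneg_left hlog (hpos _)
      _ = z ^ (t - 1 + δ) / δ := by rw [rpow_add hz (t - 1) δ]; ring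
      _ ≤ z ^ (a + 2 * δ - 1) / δ :=
          div_le_div_of_nonneg_right (rpow_le_rpow_of_exponent_le hz1 (by linarith)) hδ.le
      _ ≤ _ := by gcongr; exact le_add_of_nonneg_left (hpos _)

lemma hasDerivAt_Gamma_of_pos {x : ℝ} (hx : 0 < x) :
    HasDerivAt Gamma (Gamma x * digamma x) x := by
  have hx_ne (m : ℕ) : x ≠ -m := ((neg_nonpos.2 m.cast_nonneg).trans_lt hx).ne'
  refine (differentiableAt_Gamma hx_ne).hasDerivAt.congr_deriv ?_
  rw [digamma, mul_div_cancel₀ _ (Gamma_pos_of_pos hx).ne']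

lemma hasDerivAt_Beta_sub {a s : ℝ} (ha : 0 < a) (has : a < s) :
    HasDerivAt (fun t ↦ Beta t (s - t)) (Beta a (s - a) * (digamma a - digamma (s - a))) a := by
  have hBeta : (fun t ↦ Beta t (s - t)) = fun t ↦ Gamma t * Gamma (s - t) / Gamma s := by
    funext t
    rw [Beta, add_sub_cancel]
  have hGamma_sub : HasDerivAt (fun t ↦ Gamma (s - t)) (-(Gamma (s - a) * digamma (s - a))) a :=
    ((hasDerivAt_Gamma_of_pos (sub_pos.2 has)).comp a
      ((hasDerivAt_id' a).const_sub s)).congr_deriv (by ring)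
  rw [hBeta]
  refine (((hasDerivAt_Gamma_of_pos ha).mul hGamma_sub).div_const (Gamma s)).congr_deriv ?_
  rw [Beta, add_sub_cancel]
  ring

lemma hasDerivAt_rpow_sub_one_div {z s : ℝ} (hz : 0 < z) (t : ℝ) :
    HasDerivAt (fun t ↦ z ^ (t - 1) / (1 + z) ^ s) (z ^ (t - 1) * log z / (1 + z) ^ s) t :=
  (((hasStrictDerivAt_const_rpow hz (t - 1)).hasDerivAt.comp t
    ((hasDerivAt_id' t).sub_const 1)).div_const _).congr_deriv (by ring)

lemma hasDerivAt_integral_Ioi_rpow_div_one_add_rpow {a s : ℝ} (ha : 0 < a) (has : a < s) :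
    IntegrableOn (fun z ↦ z ^ (a - 1) * log z / (1 + z) ^ s) (Ioi 0) ∧
      HasDerivAt (fun t ↦ ∫ z in Ioi 0, z ^ (t - 1) / (1 + z) ^ s)
        (∫ z in Ioi 0, z ^ (a - 1) * log z / (1 + z) ^ s) a := by
  -- `a ± 2δ` stays in `(0, s)`, where `∫₀^∞ z^(p-1) / (1 + z)^s` converges
  set δ := min a (s - a) / 4 with hδ_def
  have hδ : 0 < δ := by positivity
  have hδa : 2 * δ < a := by linarith [min_le_left a (s - a)]
  have hδs : a + 2 * δ < s := by linarith [min_le_right a (s - a)]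
  have hmeas (t : ℝ) : Measurable fun z : ℝ ↦ z ^ (t - 1) / (1 + z) ^ s := by fun_prop
  refine hasDerivAt_integral_of_dominated_loc_of_deriv_le (Metric.ball_mem_nhds a hδ)
    (F' := fun t z ↦ z ^ (t - 1) * log z / (1 + z) ^ s)
    (bound := fun z ↦ δ⁻¹ * (z ^ (a - 2 * δ - 1) / (1 + z) ^ s + z ^ (a + 2 * δ - 1) / (1 + z) ^ s))
    (.of_forall fun t ↦ (hmeas t).aestronglyMeasurable) ?_
    (by fun_prop : Measurable fun z : ℝ ↦ z ^ (a - 1) * log z / (1 + z) ^ s).aestronglyMeasurable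
    ?_ ?_ ?_
  · exact integrableOn_Ioi_rpow_div_one_add_rpow ha has
  · filter_upwards [ae_restrict_mem measurableSet_Ioi] with z (hz : 0 < z) t ht
    rw [Metric.mem_ball, dist_eq_norm] at ht
    rw [norm_div, norm_mul, norm_of_nonneg (rpow_nonneg hz.le _),
      norm_of_nonneg (rpow_nonneg (by positivity) _)]
    calc z ^ (t - 1) * |log z| / (1 + z) ^ s
        ≤ (z ^ (a - 2 * δ - 1) + z ^ (a + 2 * δ - 1)) / δ / (1 + z) ^ s := by
          gcongr
          exact rpow_mul_abs_log_le hz hδ ht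
      _ = _ := by ring
  · exact ((integrableOn_Ioi_rpow_div_one_add_rpow (by linarith) (by linarith)).add
      (integrableOn_Ioi_rpow_div_one_add_rpow (by linarith) hδs)).const_mul _
  · filter_upwards [ae_restrict_mem measurableSet_Ioi] with z (hz : 0 < z) t _
    exact hasDerivAt_rpow_sub_one_div hz t

lemma integral_Ioi_rpow_mul_log_div_one_add_rpow {a s : ℝ} (ha : 0 < a) (has : a < s) :
    ∫ z in Ioi 0, z ^ (a - 1) * log z / (1 + z) ^ s =
      Beta a (s - a) * (digamma a - digamma (s - a)) := by
  have hBeta : (fun t ↦ ∫ z in Ioi 0, z ^ (t - 1) / (1 + z) ^ s) =ᶠ[𝓝 a] fun t ↦ Beta t (s - t) :=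
    eventually_of_mem (Ioo_mem_nhds ha has) fun t ht ↦ integral_Ioi_rpow_div_one_add_rpow ht.1 ht.2
  exact ((hasDerivAt_integral_Ioi_rpow_div_one_add_rpow ha has).2.congr_of_eventuallyEq
    hBeta.symm).unique (hasDerivAt_Beta_sub ha has)

/-- the key integral `J₁,₃` (with `n = 0`). -/
theorem J13_integral (a b c : ℝ) (ha : 0 < a) (hb : 0 < b) (hc : 0 < c) :
    ∫ z in Set.Ioi (0 : ℝ), z ^ (a - 1) * Real.log z / (1 + z / c) ^ (a + b) =
      c ^ a * Beta b a * (digamma a - digamma b + Real.log c) := by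
  have has : a < a + b := lt_add_of_pos_right a hb
  have hscale := integral_comp_mul_left_Ioi
    (fun z ↦ z ^ (a - 1) * log z / (1 + z / c) ^ (a + b)) 0 hc
  rw [mul_zero, smul_eq_mul] at hscale
  have hsplit : ∀ x ∈ Ioi (0 : ℝ), (c * x) ^ (a - 1) * log (c * x) / (1 + c * x / c) ^ (a + b) =
      c ^ (a - 1) * (x ^ (a - 1) * log x / (1 + x) ^ (a + b) +
        log c * (x ^ (a - 1) / (1 + x) ^ (a + b))) := fun x (hx : 0 < x) ↦ by
    rw [mul_div_cancel_left₀ x hc.ne', mul_rpow hc.le hx.le, log_mul hc.ne' hx.ne']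
    ring
  rw [← mul_inv_cancel_left₀ hc.ne' (∫ z in Ioi 0, _), ← hscale,
    setIntegral_congr_fun measurableSet_Ioi hsplit, integral_const_mul,
    integral_add (hasDerivAt_integral_Ioi_rpow_div_one_add_rpow ha has).1
      ((integrableOn_Ioi_rpow_div_one_add_rpow ha has).const_mul _),
    integral_const_mul, integral_Ioi_rpow_mul_log_div_one_add_rpow ha has,
    integral_Ioi_rpow_div_one_add_rpow ha has, add_sub_cancel_left, Beta_comm,
    ← mul_assoc c, ← rpow_one_add' hc.le (by linarith), add_sub_cancel]
  ring
end

section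
/- Let X_sd and X_rd be i.i.d. with Fisher-Snedecor F density f(t) = Λ^m t^{m−1}/(B(m, m_s)(1+Λt)^{m+m_s}) on (0,∞) with parameters m > 0, m_s > 1 and Λ > 0. Then the CDF of S = X_sd + X_rd satisfies, near 0, F_S(z) = (Γ(m+m_s)² Λ^{2m} / (Γ(m_s)² Γ(2m+1))) · z^{2m} · ₂F₁(m + m_s, 2m; 2m+1; −Λz) · (1 + o(1)) as z → 0⁺; in particular F_S(z) ~ Γ(m+m_s)² Λ^{2m} z^{2m} / (Γ(m_s)² Γ(2m+1)) as z → 0⁺. -/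
open MeasureTheory ProbabilityTheory Real Filter Asymptotics Topology

/-!
On `(0, z]` the density is `a t^(m-1)`, `a = Λ^m / B(m, ms)`, times the factor
`(1 + Λt)^(-(m+ms)) ∈ [(1 + Λz)^(-(m+ms)), 1]`. For independent power-law densities
`a t^(p-1)` and `b t^(q-1)` the CDF of the sum is the Beta integral `a b B(p, q) / (p + q) z^(p+q)`;
for `p = q = m` this is `C z^(2m)` with `C` the constant of the statement. Hence `F_S(z)` is
squeezed between `(1 + Λz)^(-2(m+ms)) C z^(2m)` and `C z^(2m)`. The `₂F₁` factor tends to `1`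
at `0`, its series having radius of convergence `1`.
-/

open Set
open scoped ENNReal

lemma hyp2F1_eq_ordinaryHypergeometric (a b c x : ℝ) :
    hyp2F1 a b c x = ordinaryHypergeometric a b c x := by
  rw [hyp2F1, ordinaryHypergeometric_eq_tsum]
  refine tsum_congr fun n => ?_
  simp only [poch, smul_eq_mul]
  ring

lemma tendsto_hyp2F1_nhds_zero {a b c : ℝ}
    (habc : ∀ k : ℕ, (k : ℝ) ≠ -a ∧ (k : ℝ) ≠ -b ∧ (k : ℝ) ≠ -c) :
    Tendsto (hyp2F1 a b c) (𝓝 0) (𝓝 1) := by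
  have hradius := ordinaryHypergeometricSeries_radius_eq_one (𝔸 := ℝ) a b c habc
  have hcont : ContinuousAt (ordinaryHypergeometric a b c : ℝ → ℝ) 0 :=
    (ordinaryHypergeometricSeries ℝ a b c).continuousOn.continuousAt
      (Metric.eball_mem_nhds _ (by simp [hradius]))
  simpa [funext (hyp2F1_eq_ordinaryHypergeometric a b c)] using hcont.tendsto

lemma Beta_pos {a b : ℝ} (ha : 0 < a) (hb : 0 < b) : 0 < Beta a b := by
  unfold Beta
  positivity

lemma Beta_add_one_right {p q : ℝ} (hp : 0 < p) (hq : 0 < q) :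
    Beta p (q + 1) = q / (p + q) * Beta p q := by
  have := Real.Gamma_pos_of_pos (add_pos hp hq)
  simp only [Beta]
  rw [← add_assoc, Real.Gamma_add_one hq.ne', Real.Gamma_add_one (add_pos hp hq).ne']
  field_simp

lemma integral_rpow_mul_sub_rpow {u v z : ℝ} (hu : 0 < u) (hv : 0 < v) (hz : 0 < z) :
    ∫ x in (0:ℝ)..z, x ^ (u - 1) * (z - x) ^ (v - 1) = z ^ (u + v - 1) * Beta u v := by
  have hC := Complex.betaIntegral_scaled u v hz
  rw [Complex.betaIntegral_eq_Gamma_mul_div _ _ (by simpa using hu) (by simpa using hv)] at hC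
  apply Complex.ofReal_injective
  rw [← intervalIntegral.integral_ofReal]
  have hcongr : EqOn (fun x : ℝ => ((x ^ (u - 1) * (z - x) ^ (v - 1) : ℝ) : ℂ))
      (fun x : ℝ => (x : ℂ) ^ ((u : ℂ) - 1) * ((z : ℂ) - x) ^ ((v : ℂ) - 1)) (uIcc 0 z) := by
    intro x hx
    rw [uIcc_of_le hz.le] at hx
    push_cast [Complex.ofReal_cpow hx.1, Complex.ofReal_cpow (sub_nonneg.2 hx.2)]
    rfl
  rw [intervalIntegral.integral_congr hcongr, hC, Beta]
  push_cast [Complex.ofReal_cpow hz.le, ← Complex.Gamma_ofReal]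
  ring_nf

lemma setLIntegral_Ioc_ofReal_mul_rpow {a p u : ℝ} (ha : 0 ≤ a) (hp : 0 < p) (hu : 0 ≤ u) :
    ∫⁻ t in Ioc 0 u, ENNReal.ofReal (a * t ^ (p - 1)) = ENNReal.ofReal (a * u ^ p / p) := by
  have hint : IntegrableOn (fun t : ℝ => a * t ^ (p - 1)) (Ioc 0 u) :=
    ((intervalIntegrable_iff_integrableOn_Ioc_of_le hu).1
      (intervalIntegral.intervalIntegrable_rpow' (by linarith))).const_mul a
  have hnonneg : 0 ≤ᵐ[volume.restrict (Ioc 0 u)] fun t : ℝ => a * t ^ (p - 1) :=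
    (ae_restrict_iff' measurableSet_Ioc).2 <| ae_of_all _ fun t ht =>
      mul_nonneg ha (Real.rpow_nonneg ht.1.le _)
  rw [← ofReal_integral_eq_lintegral_ofReal hint hnonneg, ← intervalIntegral.integral_of_le hu,
    intervalIntegral.integral_const_mul, integral_rpow (Or.inl (by linarith)),
    sub_add_cancel, Real.zero_rpow hp.ne', sub_zero, mul_div_assoc]

lemma setLIntegral_Iic_eq_Ioc {d : ℝ → ℝ≥0∞} (hd : ∀ t ≤ 0, d t = 0) (u : ℝ) :
    ∫⁻ t in Iic u, d t = ∫⁻ t in Ioc 0 u, d t := by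
  have hd_indicator : d = (Ioi 0).indicator d := funext fun t => by
    by_cases ht : 0 < t
    · rw [indicator_of_mem (mem_Ioi.2 ht)]
    · rw [indicator_of_notMem (notMem_Ioi.2 (not_lt.1 ht)), hd t (not_lt.1 ht)]
  conv_lhs => rw [hd_indicator]
  rw [setLIntegral_indicator measurableSet_Ioi, Ioi_inter_Iic]

lemma measure_add_le_eq_lintegral {Ω : Type*} [MeasurableSpace Ω] {μ : Measure Ω} {X Y : Ω → ℝ}
    (hX : Measurable X) (hY : Measurable Y) (hXY : IndepFun X Y μ) {f g : ℝ → ℝ}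
    (hf : Measurable f) (hfX : μ.map X = volume.withDensity (fun t => ENNReal.ofReal (f t)))
    (hgY : μ.map Y = volume.withDensity (fun t => ENNReal.ofReal (g t))) (z : ℝ) :
    μ {ω | X ω + Y ω ≤ z}
      = ∫⁻ x, ENNReal.ofReal (f x) * ∫⁻ t in Iic (z - x), ENNReal.ofReal (g t) := by
  have hS : MeasurableSet {p : ℝ × ℝ | p.1 + p.2 ≤ z} :=
    measurableSet_le (by fun_prop) measurable_const
  have hsection (x : ℝ) : Prod.mk x ⁻¹' {p : ℝ × ℝ | p.1 + p.2 ≤ z} = Iic (z - x) := by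
    ext t; simp [le_sub_iff_add_le']
  have hmap := (indepFun_iff_map_prod_eq_prod_map_map' hX.aemeasurable hY.aemeasurable
    (by rw [hfX]; infer_instance) (by rw [hgY]; infer_instance)).1 hXY
  calc μ {ω | X ω + Y ω ≤ z}
      = μ.map (fun ω => (X ω, Y ω)) {p : ℝ × ℝ | p.1 + p.2 ≤ z} :=
        (Measure.map_apply (hX.prodMk hY) hS).symm
    _ = ∫⁻ x, volume.withDensity (fun t => ENNReal.ofReal (g t))
          (Prod.mk x ⁻¹' {p : ℝ × ℝ | p.1 + p.2 ≤ z})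
          ∂volume.withDensity (fun t => ENNReal.ofReal (f t)) := by
        rw [hmap, hfX, hgY, Measure.prod_apply hS]
    _ = _ := by
        rw [lintegral_withDensity_eq_lintegral_mul _ hf.ennreal_ofReal
          (measurable_measure_prodMk_left hS)]
        simp_rw [Pi.mul_apply, hsection, withDensity_apply _ measurableSet_Iic]

noncomputable def sumCDF (f g : ℝ → ℝ≥0∞) (z : ℝ) : ℝ≥0∞ :=
  ∫⁻ x in Ioc 0 z, f x * ∫⁻ t in Ioc 0 (z - x), g t

lemma lintegral_mul_setLIntegral_Iic_eq_sumCDF {f g : ℝ → ℝ≥0∞} (hf : ∀ t ≤ 0, f t = 0)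
    (hg : ∀ t ≤ 0, g t = 0) (z : ℝ) :
    ∫⁻ x, f x * ∫⁻ t in Iic (z - x), g t = sumCDF f g z := by
  simp_rw [setLIntegral_Iic_eq_Ioc hg]
  refine (setLIntegral_eq_of_support_subset fun x hx => ?_).symm
  by_contra hxz
  rcases not_and_or.1 hxz with hx0 | hxz
  · exact hx (by simp [hf x (not_lt.1 hx0)])
  · exact hx (by simp [Ioc_eq_empty (not_lt.2 (sub_nonpos.2 (not_le.1 hxz).le))])

lemma sumCDF_mono {f₁ f₂ g₁ g₂ : ℝ → ℝ≥0∞} {z : ℝ} (hf : ∀ t ∈ Ioc 0 z, f₁ t ≤ f₂ t)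
    (hg : ∀ t ∈ Ioc 0 z, g₁ t ≤ g₂ t) : sumCDF f₁ g₁ z ≤ sumCDF f₂ g₂ z := by
  refine setLIntegral_mono' measurableSet_Ioc fun x hx => mul_le_mul' (hf x hx) ?_
  exact setLIntegral_mono' measurableSet_Ioc fun t ht =>
    hg t ⟨ht.1, ht.2.trans (sub_le_self z hx.1.le)⟩

lemma sumCDF_ofReal_mul_rpow {a b p q z : ℝ} (ha : 0 ≤ a) (hb : 0 ≤ b) (hp : 0 < p)
    (hq : 0 < q) (hz : 0 < z) :
    sumCDF (fun t => ENNReal.ofReal (a * t ^ (p - 1))) (fun t => ENNReal.ofReal (b * t ^ (q - 1)))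
      z = ENNReal.ofReal (a * b * Beta p q / (p + q) * z ^ (p + q)) := by
  have hbeta := integral_rpow_mul_sub_rpow hp (by linarith : 0 < q + 1) hz
  rw [add_sub_cancel_right] at hbeta
  -- integrable since its integral is nonzero, a non-integrable function having integral `0`
  have hint : IntegrableOn (fun x => x ^ (p - 1) * (z - x) ^ q) (Ioc 0 z) :=
    (intervalIntegrable_iff_integrableOn_Ioc_of_le hz.le).1
      (intervalIntegral.intervalIntegrable_of_integral_ne_zero
        (by rw [hbeta]; have := Beta_pos hp (by linarith : 0 < q + 1); positivity))
  have hnonneg : 0 ≤ᵐ[volume.restrict (Ioc 0 z)] fun x => a * b / q * (x ^ (p - 1) * (z - x) ^ q) :=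
    (ae_restrict_iff' measurableSet_Ioc).2 <| ae_of_all _ fun x hx => by
      have := sub_nonneg.2 hx.2; have := hx.1.le; positivity
  calc sumCDF _ _ z
      = ∫⁻ x in Ioc 0 z, ENNReal.ofReal (a * b / q * (x ^ (p - 1) * (z - x) ^ q)) := by
        refine setLIntegral_congr_fun measurableSet_Ioc fun x hx => ?_
        have := hx.1.le
        rw [setLIntegral_Ioc_ofReal_mul_rpow hb hq (sub_nonneg.2 hx.2),
          ← ENNReal.ofReal_mul (by positivity)]
        ring_nf
    _ = ENNReal.ofReal (a * b / q * ∫ x in (0:ℝ)..z, x ^ (p - 1) * (z - x) ^ q) := by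
        rw [intervalIntegral.integral_of_le hz.le, ← integral_const_mul,
          ofReal_integral_eq_lintegral_ofReal (hint.const_mul _) hnonneg]
    _ = _ := by
        rw [hbeta, Beta_add_one_right hp hq, show p + (q + 1) - 1 = p + q by ring]
        congr 1
        field_simp

lemma measurable_fisherPDFΛ (m ms Λ : ℝ) : Measurable (fisherPDFΛ m ms Λ) :=
  Measurable.ite (measurableSet_lt measurable_const measurable_id) (by fun_prop) measurable_const

lemma fisherPDFΛ_le {m ms Λ t : ℝ} (hB : 0 < Beta m ms) (hΛ : 0 ≤ Λ) (hs : 0 ≤ m + ms)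
    (ht : 0 < t) : fisherPDFΛ m ms Λ t ≤ Λ ^ m / Beta m ms * t ^ (m - 1) := by
  have hΛt : 1 ≤ 1 + Λ * t := le_add_of_nonneg_right (by positivity)
  rw [fisherPDFΛ, if_pos ht, div_mul_eq_mul_div, mul_comm (Beta m ms)]
  exact div_le_div_of_nonneg_left (by positivity) hB
    (le_mul_of_one_le_left hB.le (Real.one_le_rpow hΛt hs))

lemma le_fisherPDFΛ {m ms Λ t z : ℝ} (hB : 0 < Beta m ms) (hΛ : 0 ≤ Λ) (hs : 0 ≤ m + ms)
    (ht : 0 < t) (htz : t ≤ z) :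
    Λ ^ m / Beta m ms / (1 + Λ * z) ^ (m + ms) * t ^ (m - 1) ≤ fisherPDFΛ m ms Λ t := by
  have hΛt : 0 < 1 + Λ * t := by positivity
  rw [fisherPDFΛ, if_pos ht, div_div, div_mul_eq_mul_div]
  exact div_le_div_of_nonneg_left (by positivity) (by positivity) <|
    mul_le_mul_of_nonneg_left (Real.rpow_le_rpow hΛt.le (by gcongr) hs) hB.le

lemma sumCDF_fisherPDFΛ_bounds {m ms Λ z : ℝ} (hm : 0 < m) (hms : 0 < ms) (hΛ : 0 < Λ)
    (hz : 0 < z) :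
    let F := (sumCDF (fun t => ENNReal.ofReal (fisherPDFΛ m ms Λ t))
      (fun t => ENNReal.ofReal (fisherPDFΛ m ms Λ t)) z).toReal
    let C := Real.Gamma (m + ms) ^ 2 * Λ ^ (2 * m) / (Real.Gamma ms ^ 2 * Real.Gamma (2 * m + 1))
    C * z ^ (2 * m) / ((1 + Λ * z) ^ (m + ms)) ^ 2 ≤ F ∧ F ≤ C * z ^ (2 * m) := by
  intro F C
  have hB := Beta_pos hm hms
  have hs : 0 ≤ m + ms := by linarith
  set a := Λ ^ m / Beta m ms
  set K := (1 + Λ * z) ^ (m + ms)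
  have hK : 0 < K := by positivity
  have hC : a * a * Beta m m / (m + m) * z ^ (m + m) = C * z ^ (2 * m) := by
    simp only [a, C, Beta]
    rw [← two_mul, Real.Gamma_add_one (by positivity),
      show Λ ^ (2 * m) = Λ ^ m * Λ ^ m by rw [two_mul, Real.rpow_add hΛ]]
    field_simp
  have hupper : sumCDF (fun t => ENNReal.ofReal (fisherPDFΛ m ms Λ t))
      (fun t => ENNReal.ofReal (fisherPDFΛ m ms Λ t)) z ≤ ENNReal.ofReal (C * z ^ (2 * m)) := by
    have hle t (ht : t ∈ Ioc 0 z) := ENNReal.ofReal_le_ofReal (fisherPDFΛ_le hB hΛ.le hs ht.1)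
    rw [← hC, ← sumCDF_ofReal_mul_rpow (by positivity) (by positivity) hm hm hz]
    exact sumCDF_mono hle hle
  have hlower : ENNReal.ofReal (C * z ^ (2 * m) / K ^ 2) ≤ sumCDF
      (fun t => ENNReal.ofReal (fisherPDFΛ m ms Λ t))
      (fun t => ENNReal.ofReal (fisherPDFΛ m ms Λ t)) z := by
    have hle t (ht : t ∈ Ioc 0 z) :=
      ENNReal.ofReal_le_ofReal (le_fisherPDFΛ hB hΛ.le hs ht.1 ht.2)
    rw [← hC, show a * a * Beta m m / (m + m) * z ^ (m + m) / K ^ 2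
        = a / K * (a / K) * Beta m m / (m + m) * z ^ (m + m) by field_simp,
      ← sumCDF_ofReal_mul_rpow (by positivity) (by positivity) hm hm hz]
    exact sumCDF_mono hle hle
  exact ⟨(ENNReal.ofReal_le_iff_le_toReal (ne_top_of_le_ne_top ENNReal.ofReal_ne_top hupper)).1
    hlower, ENNReal.toReal_le_of_le_ofReal (by positivity) hupper⟩

lemma isEquivalent_of_div_le_of_le {α : Type*} {l : Filter α} {f g c : α → ℝ}
    (hc : Tendsto c l (𝓝 1)) (hg : ∀ᶠ x in l, 0 < g x) (hlo : ∀ᶠ x in l, g x / c x ≤ f x)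
    (hhi : ∀ᶠ x in l, f x ≤ g x) : f ~[l] g := by
  rw [isEquivalent_iff_tendsto_one (hg.mono fun x hx => hx.ne')]
  refine tendsto_of_tendsto_of_tendsto_of_le_of_le' (by simpa using hc.inv₀ one_ne_zero)
    tendsto_const_nhds ?_ ?_
  · filter_upwards [hg, hlo] with x hgx hlox
    rw [Pi.div_apply, le_div_iff₀ hgx, ← div_eq_inv_mul]
    exact hlox
  · filter_upwards [hg, hhi] with x hgx hhix
    exact div_le_one_of_le₀ hhix hgx.le

lemma Asymptotics.IsEquivalent.mul_tendsto_one {α : Type*} {l : Filter α} {f g h : α → ℝ}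
    (hfg : f ~[l] g) (hh : Tendsto h l (𝓝 1)) : f ~[l] g * h := by
  simpa using hfg.mul ((isEquivalent_const_iff_tendsto one_ne_zero).2 hh).symm

theorem fisher_sum_cdf_asymptotic_general {Ω : Type*} [MeasurableSpace Ω] (μ : Measure Ω)
    (X Y : Ω → ℝ) (hX : Measurable X) (hY : Measurable Y)
    (hindep : IndepFun X Y μ) (m ms Λ : ℝ) (hm : 0 < m) (hms : 1 < ms) (hΛ : 0 < Λ)
    (hfx : μ.map X = volume.withDensity (fun t => ENNReal.ofReal (fisherPDFΛ m ms Λ t)))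
    (hfy : μ.map Y = volume.withDensity (fun t => ENNReal.ofReal (fisherPDFΛ m ms Λ t))) :
    (fun z => (μ {ω | X ω + Y ω ≤ z}).toReal) ~[𝓝[>] (0 : ℝ)]
        (fun z => Real.Gamma (m + ms) ^ 2 * Λ ^ (2 * m) /
          (Real.Gamma ms ^ 2 * Real.Gamma (2 * m + 1)) * z ^ (2 * m) *
          hyp2F1 (m + ms) (2 * m) (2 * m + 1) (-(Λ * z))) ∧
    (fun z => (μ {ω | X ω + Y ω ≤ z}).toReal) ~[𝓝[>] (0 : ℝ)]
        (fun z => Real.Gamma (m + ms) ^ 2 * Λ ^ (2 * m) * z ^ (2 * m) /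
          (Real.Gamma ms ^ 2 * Real.Gamma (2 * m + 1))) := by
  set C := Real.Gamma (m + ms) ^ 2 * Λ ^ (2 * m) / (Real.Gamma ms ^ 2 * Real.Gamma (2 * m + 1))
  have hvanish t (ht : t ≤ 0) : ENNReal.ofReal (fisherPDFΛ m ms Λ t) = 0 := by
    simp [fisherPDFΛ, not_lt.2 ht]
  have hcdf : ∀ᶠ z in 𝓝[>] (0 : ℝ), C * z ^ (2 * m) / ((1 + Λ * z) ^ (m + ms)) ^ 2
      ≤ (μ {ω | X ω + Y ω ≤ z}).toReal ∧ (μ {ω | X ω + Y ω ≤ z}).toReal ≤ C * z ^ (2 * m) := by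
    filter_upwards [self_mem_nhdsWithin] with z hz
    rw [measure_add_le_eq_lintegral hX hY hindep (measurable_fisherPDFΛ m ms Λ) hfx hfy,
      lintegral_mul_setLIntegral_Iic_eq_sumCDF hvanish hvanish]
    exact sumCDF_fisherPDFΛ_bounds hm (one_pos.trans hms) hΛ hz
  have hK : Tendsto (fun z : ℝ => ((1 + Λ * z) ^ (m + ms)) ^ 2) (𝓝[>] 0) (𝓝 1) := by
    have : ContinuousAt (fun z : ℝ => ((1 + Λ * z) ^ (m + ms)) ^ 2) 0 := by
      fun_prop (disch := simp)
    simpa using this.tendsto.mono_left nhdsWithin_le_nhds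
  have hpos : ∀ᶠ z in 𝓝[>] (0 : ℝ), 0 < C * z ^ (2 * m) := by
    filter_upwards [self_mem_nhdsWithin] with z (hz : 0 < z)
    positivity
  have hequiv : (fun z => (μ {ω | X ω + Y ω ≤ z}).toReal) ~[𝓝[>] (0 : ℝ)]
      fun z => C * z ^ (2 * m) :=
    isEquivalent_of_div_le_of_le hK hpos (hcdf.mono fun _ h => h.1) (hcdf.mono fun _ h => h.2)
  have hhyp : Tendsto (fun z : ℝ => hyp2F1 (m + ms) (2 * m) (2 * m + 1) (-(Λ * z)))
      (𝓝[>] 0) (𝓝 1) := by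
    refine (tendsto_hyp2F1_nhds_zero fun k => ?_).comp ?_
    · have hk : (0 : ℝ) ≤ k := k.cast_nonneg
      exact ⟨ne_of_gt (by linarith), ne_of_gt (by linarith), ne_of_gt (by linarith)⟩
    · exact ((continuous_const.mul continuous_id).neg.tendsto' 0 0 (by simp)).mono_left
        nhdsWithin_le_nhds
  refine ⟨hequiv.mul_tendsto_one hhyp, ?_⟩
  convert hequiv using 2
  ring

/-- small-argument behavior of the CDF of a sum of two i.i.d.
Fisher-Snedecor 𝓕 variates. -/
theorem fisher_sum_cdf_asymptotic {Ω : Type*} [MeasurableSpace Ω] (μ : Measure Ω)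
    [IsProbabilityMeasure μ] (X Y : Ω → ℝ) (hX : Measurable X) (hY : Measurable Y)
    (hindep : IndepFun X Y μ) (m ms Λ : ℝ) (hm : 0 < m) (hms : 1 < ms) (hΛ : 0 < Λ)
    (hfx : μ.map X = volume.withDensity (fun t => ENNReal.ofReal (fisherPDFΛ m ms Λ t)))
    (hfy : μ.map Y = volume.withDensity (fun t => ENNReal.ofReal (fisherPDFΛ m ms Λ t))) :
    (fun z => (μ {ω | X ω + Y ω ≤ z}).toReal) ~[𝓝[>] (0 : ℝ)]
        (fun z => Real.Gamma (m + ms) ^ 2 * Λ ^ (2 * m) /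
          (Real.Gamma ms ^ 2 * Real.Gamma (2 * m + 1)) * z ^ (2 * m) *
          hyp2F1 (m + ms) (2 * m) (2 * m + 1) (-(Λ * z))) ∧
    (fun z => (μ {ω | X ω + Y ω ≤ z}).toReal) ~[𝓝[>] (0 : ℝ)]
        (fun z => Real.Gamma (m + ms) ^ 2 * Λ ^ (2 * m) * z ^ (2 * m) /
          (Real.Gamma ms ^ 2 * Real.Gamma (2 * m + 1))) :=
  fisher_sum_cdf_asymptotic_general μ X Y hX hY hindep m ms Λ hm hms hΛ hfx hfy
end
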